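/- Let K ⊂ ℝⁿ (n ≥ 4) be a strictly convex body with a unique diameter D, and suppose every orthogonal projection of K onto a hyperplane is an (n−1)-dimensional body of revolution. Then K is a body of revolution with axis containing D. -/

import Mathlib

open Metric Set Filter

/-- Rotation by π about the line through `a` with (unit) direction `u`
(in the plane, this is the reflection across that line). -/
noncomputable def lineRefl {d : ℕ} (a u x : EuclideanSpace ℝ (Fin d)) :
    EuclideanSpace ℝ (Fin d) :=
  (2:ℝ) • a - x + ((2:ℝ) * (inner ℝ (x - a) u : ℝ)) • u

/-- A convex body: compact, convex, nonempty interior. -/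
def IsConvexBody {d : ℕ} (K : Set (EuclideanSpace ℝ (Fin d))) : Prop :=
  IsCompact K ∧ Convex ℝ K ∧ (interior K).Nonempty

/-- Central symmetry with centre `o`. -/
def CentSym {d : ℕ} (K : Set (EuclideanSpace ℝ (Fin d)))
    (o : EuclideanSpace ℝ (Fin d)) : Prop :=
  ∀ x, x ∈ K ↔ (2:ℝ) • o - x ∈ K

/-- The line through `a` with direction `u` is an axis of symmetry of `K`. -/
def IsAxisOfSym {d : ℕ} (K : Set (EuclideanSpace ℝ (Fin d)))
    (a u : EuclideanSpace ℝ (Fin d)) : Prop :=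
  lineRefl a u '' K = K

/-- `K` is a body of revolution with axis the line through `a` with direction `u`:
every isometry fixing the axis pointwise maps `K` onto itself. -/
def IsRevBody {d : ℕ} (K : Set (EuclideanSpace ℝ (Fin d)))
    (a u : EuclideanSpace ℝ (Fin d)) : Prop :=
  ∀ f : EuclideanSpace ℝ (Fin d) ≃ᵢ EuclideanSpace ℝ (Fin d),
    (∀ t : ℝ, f (a + t • u) = a + t • u) → f '' K = K

/-- Orthogonal projection onto the hyperplane `u^⊥` (for `u` a unit vector). -/
noncomputable def projHyp {d : ℕ} (u x : EuclideanSpace ℝ (Fin d)) :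
    EuclideanSpace ℝ (Fin d) :=
  x - (inner ℝ x u : ℝ) • u

/-- `S` is a body of revolution inside the hyperplane `P`, with axis the line
through `b` with direction `w` (a line contained in `P`). -/
def IsRevBodyIn {d : ℕ} (P S : Set (EuclideanSpace ℝ (Fin d)))
    (b w : EuclideanSpace ℝ (Fin d)) : Prop :=
  w ≠ 0 ∧ b ∈ P ∧ (∀ t : ℝ, b + t • w ∈ P) ∧
    ∀ f : EuclideanSpace ℝ (Fin d) ≃ᵢ EuclideanSpace ℝ (Fin d),
      (∀ t : ℝ, f (b + t • w) = b + t • w) → f '' P = P → f '' S = S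

/-- The segment `[d₁, d₂]` is the unique diameter (chord of maximal length) of `K`. -/
def UniqueDiameter {d : ℕ} (K : Set (EuclideanSpace ℝ (Fin d)))
    (d₁ d₂ : EuclideanSpace ℝ (Fin d)) : Prop :=
  d₁ ∈ K ∧ d₂ ∈ K ∧ d₁ ≠ d₂ ∧ (∀ x ∈ K, ∀ y ∈ K, dist x y ≤ dist d₁ d₂) ∧
    ∀ x ∈ K, ∀ y ∈ K, dist x y = dist d₁ d₂ → ({x, y} : Set _) = {d₁, d₂}


section Stmt12Helpers

variable {F : Type*} [NormedAddCommGroup F] [InnerProductSpace ℝ F]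

local notation "⟪" x ", " y "⟫" => @inner ℝ _ _ x y

/-- Reflection across the affine hyperplane through `b` with unit normal `ζ`. -/
noncomputable def reflMap (b ζ x : F) : F := x - (2 * ⟪x - b, ζ⟫) • ζ

lemma reflMap_sub (b ζ x y : F) :
    reflMap b ζ x - reflMap b ζ y = (x - y) - (2 * ⟪x - y, ζ⟫) • ζ := by
  simp only [reflMap, inner_sub_left]
  module

lemma norm_refl_vec {ζ : F} (hζ : ‖ζ‖ = 1) (a : F) :
    ‖a - (2 * ⟪a, ζ⟫) • ζ‖ = ‖a‖ := by
  have h := @norm_sub_sq_real F _ _ a ((2 * ⟪a, ζ⟫) • ζ)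
  rw [real_inner_smul_right, norm_smul, hζ] at h
  have h2 : ‖a - (2 * ⟪a, ζ⟫) • ζ‖ ^ 2 = ‖a‖ ^ 2 := by
    rw [h]
    have h3 : (‖(2:ℝ) * ⟪a, ζ⟫‖:ℝ) ^ 2 = (2 * ⟪a, ζ⟫)^2 := sq_abs _
    rw [mul_one, h3]; ring
  nlinarith [norm_nonneg (a - (2 * ⟪a, ζ⟫) • ζ), norm_nonneg a]

lemma reflMap_invol {ζ : F} (hζ : ‖ζ‖ = 1) (b x : F) :
    reflMap b ζ (reflMap b ζ x) = x := by
  have hζζ : ⟪ζ, ζ⟫ = 1 := by rw [real_inner_self_eq_norm_sq, hζ]; norm_num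
  simp only [reflMap, inner_sub_left, real_inner_smul_left, hζζ]
  module

/-- Reflection as an isometry equivalence. -/
noncomputable def reflIso {ζ : F} (hζ : ‖ζ‖ = 1) (b : F) : F ≃ᵢ F where
  toFun := reflMap b ζ
  invFun := reflMap b ζ
  left_inv := reflMap_invol hζ b
  right_inv := reflMap_invol hζ b
  isometry_toFun := by
    intro x y
    simp only [edist_dist, dist_eq_norm, reflMap_sub, norm_refl_vec hζ]

lemma reflIso_apply {ζ : F} (hζ : ‖ζ‖ = 1) (b x : F) :
    reflIso hζ b x = x - (2 * ⟪x - b, ζ⟫) • ζ := rfl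

lemma reflIso_fix {ζ : F} (hζ : ‖ζ‖ = 1) {b x : F} (h : ⟪x - b, ζ⟫ = 0) :
    reflIso hζ b x = x := by simp [reflIso_apply, h]

lemma sSup_image_add (T : Set ℝ) (hne : T.Nonempty) (hb : BddAbove T) (c : ℝ) :
    sSup ((fun r => r + c) '' T) = sSup T + c := by
  have := Monotone.map_csSup_of_continuousAt (f := fun r : ℝ => r + c)
    (continuous_id.add continuous_const).continuousAt
    (fun a b hab => by simpa using hab) hne hb
  exact this.symm

/-- support function -/
noncomputable def supFn (K : Set F) (v : F) : ℝ := sSup ((fun x => ⟪x, v⟫) '' K)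

lemma bddAbove_supImage {K : Set F} (hK : IsCompact K) (v : F) :
    BddAbove ((fun x => ⟪x, v⟫) '' K) :=
  (hK.image (continuous_id.inner continuous_const)).bddAbove

lemma le_supFn {K : Set F} (hK : IsCompact K) {x : F} (hx : x ∈ K) (v : F) :
    ⟪x, v⟫ ≤ supFn K v :=
  le_csSup (bddAbove_supImage hK v) (mem_image_of_mem _ hx)

lemma supFn_le {K : Set F} (hne : K.Nonempty) {v : F} {c : ℝ}
    (h : ∀ x ∈ K, ⟪x, v⟫ ≤ c) : supFn K v ≤ c :=
  csSup_le (hne.image _) (by rintro r ⟨x, hx, rfl⟩; exact h x hx)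

lemma subset_of_supFn_le [CompleteSpace F] {K C : Set F} (hKc : IsCompact K)
    (hCne : C.Nonempty) (hC : Convex ℝ C) (hCc : IsClosed C)
    (h : ∀ v, supFn K v ≤ supFn C v) : K ⊆ C := by
  intro x hx
  by_contra hxC
  obtain ⟨f, u, h1, h2⟩ := geometric_hahn_banach_closed_point hC hCc hxC
  set v := (InnerProductSpace.toDual ℝ F).symm f with hv
  have hfv : ∀ y : F, f y = ⟪y, v⟫ := by
    intro y
    rw [real_inner_comm]
    simp [hv, InnerProductSpace.toDual_symm_apply]
  have hxK : ⟪x, v⟫ ≤ supFn K v := le_supFn hKc hx v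
  have hCu : supFn C v ≤ u := supFn_le hCne (fun y hy => by
    rw [← hfv]; exact (h1 y hy).le)
  have := (hxK.trans (h v)).trans hCu
  rw [← hfv] at this
  exact absurd h2 (not_lt.mpr this)

/-- Linear reflection across the hyperplane `ζ^⊥`. -/
noncomputable def linReflL (ζ : F) : F →ₗ[ℝ] F where
  toFun x := x - (2 * ⟪x, ζ⟫) • ζ
  map_add' x y := by simp only [inner_add_left]; module
  map_smul' c x := by simp only [real_inner_smul_left, RingHom.id_apply]; module

lemma linReflL_invol {ζ : F} (hζ : ‖ζ‖ = 1) : Function.Involutive (linReflL ζ) := by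
  intro x
  have := reflMap_invol hζ 0 x
  simpa [reflMap, linReflL] using this

/-- Linear reflection as a linear isometry equivalence. -/
noncomputable def linRefl {ζ : F} (hζ : ‖ζ‖ = 1) : F ≃ₗᵢ[ℝ] F :=
  { LinearEquiv.ofInvolutive (linReflL ζ) (linReflL_invol hζ) with
    norm_map' := fun x => norm_refl_vec hζ x }

lemma linRefl_apply {ζ : F} (hζ : ‖ζ‖ = 1) (x : F) :
    linRefl hζ x = x - (2 * ⟪x, ζ⟫) • ζ := rfl

lemma linRefl_symm_apply {ζ : F} (hζ : ‖ζ‖ = 1) (x : F) :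
    (linRefl hζ).symm x = x - (2 * ⟪x, ζ⟫) • ζ := rfl

lemma reflIso_eq_linRefl {ζ : F} (hζ : ‖ζ‖ = 1) (b x : F) :
    reflIso hζ b x = linRefl hζ x + (2 * ⟪b, ζ⟫) • ζ := by
  simp only [reflIso_apply, linRefl_apply, inner_sub_left]
  module

lemma inner_symm_left (A : F ≃ₗᵢ[ℝ] F) (x y : F) : ⟪A x, y⟫ = ⟪x, A.symm y⟫ := by
  conv_lhs => rw [show y = A (A.symm y) by simp]
  rw [A.inner_map_map]

lemma supFn_image (A : F ≃ₗᵢ[ℝ] F) (c : F) {S : Set F} (hSne : S.Nonempty)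
    (hSc : IsCompact S) (y : F) :
    supFn ((fun x => A x + c) '' S) y = supFn S (A.symm y) + ⟪c, y⟫ := by
  unfold supFn
  rw [Set.image_image]
  have himg : (fun x => ⟪A x + c, y⟫) '' S
      = (fun r => r + ⟪c, y⟫) '' ((fun x => ⟪x, A.symm y⟫) '' S) := by
    rw [Set.image_image]
    apply Set.image_congr
    intro x _
    rw [inner_add_left, inner_symm_left]
  rw [himg, sSup_image_add _ (hSne.image _) (bddAbove_supImage hSc _)]

lemma exists_unit_orth {n : ℕ} (hn : 4 ≤ n) (a b c : EuclideanSpace ℝ (Fin n)) :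
    ∃ u : EuclideanSpace ℝ (Fin n), ‖u‖ = 1 ∧ ⟪a, u⟫ = 0 ∧ ⟪b, u⟫ = 0 ∧ ⟪c, u⟫ = 0 := by
  classical
  set V : Submodule ℝ (EuclideanSpace ℝ (Fin n)) := Submodule.span ℝ {a, b, c} with hV
  have hfr : Module.finrank ℝ V ≤ 3 := by
    have := finrank_span_le_card (R := ℝ) ({a, b, c} : Set (EuclideanSpace ℝ (Fin n)))
    refine this.trans ?_
    have : ({a, b, c} : Set (EuclideanSpace ℝ (Fin n))).toFinset ⊆ {a, b, c} := by
      intro x hx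
      simpa using hx
    calc ({a, b, c} : Set (EuclideanSpace ℝ (Fin n))).toFinset.card
        ≤ ({a, b, c} : Finset (EuclideanSpace ℝ (Fin n))).card := Finset.card_le_card this
      _ ≤ 3 := by
          refine (Finset.card_insert_le _ _).trans ?_
          simp [Finset.card_insert_le]
          exact Nat.lt_of_le_of_lt (Finset.card_insert_le _ _) (by simp)
  have hsum : Module.finrank ℝ V + Module.finrank ℝ Vᗮ = n := by
    rw [V.finrank_add_finrank_orthogonal, finrank_euclideanSpace_fin]
  have hne : Vᗮ ≠ ⊥ := by
    intro hbot
    rw [hbot] at hsum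
    simp [finrank_bot] at hsum
    omega
  obtain ⟨u', hu'V, hu'0⟩ := Submodule.exists_mem_ne_zero_of_ne_bot hne
  refine ⟨(‖u'‖⁻¹ : ℝ) • u', ?_, ?_, ?_, ?_⟩
  · rw [norm_smul, norm_inv, norm_norm, inv_mul_cancel₀ (norm_ne_zero_iff.mpr hu'0)]
  all_goals
    rw [real_inner_smul_right]
    rw [(Submodule.mem_orthogonal V u').mp hu'V _ (Submodule.subset_span (by simp))]
    ring

lemma norm_proj_le {u : F} (hu : ‖u‖ = 1) (a : F) : ‖a - ⟪a, u⟫ • u‖ ≤ ‖a‖ := by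
  have h := @norm_sub_sq_real F _ _ a (⟪a, u⟫ • u)
  rw [real_inner_smul_right, norm_smul, hu, mul_one] at h
  have h2 : (‖⟪a, u⟫‖:ℝ) ^ 2 = ⟪a, u⟫ ^ 2 := sq_abs _
  rw [h2] at h
  nlinarith [norm_nonneg (a - ⟪a, u⟫ • u), norm_nonneg a]

end Stmt12Helpers

section Stmt12Aux

local notation "⟪" x ", " y "⟫" => @inner ℝ _ _ x y

set_option maxHeartbeats 2000000 in
lemma stmt12_key {n : ℕ} (hn : 4 ≤ n) {K : Set (EuclideanSpace ℝ (Fin n))}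
    (hKcomp : IsCompact K)
    {d₁ d₂ : EuclideanSpace ℝ (Fin n)} (hD : UniqueDiameter K d₁ d₂)
    (hproj : ∀ u : EuclideanSpace ℝ (Fin n), ‖u‖ = 1 →
      ∃ b w, IsRevBodyIn {x | (inner ℝ x u : ℝ) = 0} (projHyp u '' K) b w)
    (B : EuclideanSpace ℝ (Fin n) ≃ₗᵢ[ℝ] EuclideanSpace ℝ (Fin n))
    (hBe : B (d₂ - d₁) = d₂ - d₁) (v : EuclideanSpace ℝ (Fin n)) :
    supFn K (B v) - ⟪d₁, B v⟫ = supFn K v - ⟪d₁, v⟫ := by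
  classical
  obtain ⟨hd₁K, hd₂K, hdne, hdiam, huniq⟩ := hD
  by_cases hvv : B v = v
  · rw [hvv]
  set e : EuclideanSpace ℝ (Fin n) := d₂ - d₁ with he_def
  have he0 : e ≠ 0 := sub_ne_zero.mpr (Ne.symm hdne)
  set w₂ := B v with hw₂def
  -- choose the projection direction u
  obtain ⟨u, hu1, hue, huv, huw⟩ := exists_unit_orth hn e v w₂
  have huu : ⟪u, u⟫ = (1:ℝ) := by
    rw [real_inner_self_eq_norm_sq, hu1]; norm_num
  -- basic facts about the projection
  have hπP : ∀ x : EuclideanSpace ℝ (Fin n), ⟪projHyp u x, u⟫ = (0:ℝ) := by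
    intro x
    show ⟪x - (⟪x, u⟫ : ℝ) • u, u⟫ = (0:ℝ)
    rw [inner_sub_left, real_inner_smul_left, huu]
    ring
  have hπsub : ∀ x y : EuclideanSpace ℝ (Fin n),
      projHyp u x - projHyp u y = (x - y) - ⟪x - y, u⟫ • u := by
    intro x y
    simp only [projHyp, inner_sub_left]
    module
  have hπlip : ∀ x y : EuclideanSpace ℝ (Fin n),
      dist (projHyp u x) (projHyp u y) ≤ dist x y := by
    intro x y
    rw [dist_eq_norm, dist_eq_norm, hπsub]
    exact norm_proj_le hu1 (x - y)
  have hπcont : Continuous (projHyp u) := by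
    unfold projHyp
    exact continuous_id.sub (((continuous_id.inner (𝕜 := ℝ) continuous_const)).smul continuous_const)
  set S := projHyp u '' K with hSdef
  have hScomp : IsCompact S := hKcomp.image hπcont
  set p₁ := projHyp u d₁ with hp₁def
  set p₂ := projHyp u d₂ with hp₂def
  have hp₁S : p₁ ∈ S := Set.mem_image_of_mem _ hd₁K
  have hp₂S : p₂ ∈ S := Set.mem_image_of_mem _ hd₂K
  have hSne : S.Nonempty := ⟨p₁, hp₁S⟩
  have hp21 : p₂ - p₁ = e := by
    rw [hp₂def, hp₁def, hπsub, ← he_def, hue]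
    simp
  have hdistp : dist p₁ p₂ = dist d₁ d₂ := by
    rw [dist_eq_norm, dist_eq_norm, ← norm_neg (p₁ - p₂), ← norm_neg (d₁ - d₂)]
    rw [neg_sub, neg_sub, hp21]
  -- the projected body has the same unique diameter
  have hSdiam : ∀ x ∈ S, ∀ y ∈ S, dist x y ≤ dist p₁ p₂ := by
    rintro x ⟨x', hx', rfl⟩ y ⟨y', hy', rfl⟩
    rw [hdistp]
    exact (hπlip x' y').trans (hdiam x' hx' y' hy')
  have hSuniq : ∀ x ∈ S, ∀ y ∈ S, dist x y = dist p₁ p₂ →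
      ({x, y} : Set (EuclideanSpace ℝ (Fin n))) = {p₁, p₂} := by
    rintro x ⟨x', hx', rfl⟩ y ⟨y', hy', rfl⟩ hxy
    rw [hdistp] at hxy
    have h1 : dist x' y' = dist d₁ d₂ :=
      le_antisymm (hdiam x' hx' y' hy') (hxy ▸ hπlip x' y')
    have h2 := huniq x' hx' y' hy' h1
    rw [Set.pair_eq_pair_iff] at h2 ⊢
    rcases h2 with ⟨h3, h4⟩ | ⟨h3, h4⟩
    · exact Or.inl ⟨by rw [h3], by rw [h4]⟩
    · exact Or.inr ⟨by rw [h3], by rw [h4]⟩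
  -- the axis of revolution of the projection
  obtain ⟨b, w, hw0, hbP, haxP, hrev⟩ := hproj u hu1
  have hbu : ⟪b, u⟫ = (0:ℝ) := hbP
  have hwu : ⟪w, u⟫ = (0:ℝ) := by
    have h1 : ⟪b + (1:ℝ) • w, u⟫ = (0:ℝ) := haxP 1
    rw [one_smul, inner_add_left, hbu, zero_add] at h1
    exact h1
  -- reflections preserving the axis and the hyperplane preserve S
  have hreflS : ∀ (q ζ : EuclideanSpace ℝ (Fin n)) (hζ : ‖ζ‖ = 1),
      ⟪ζ, u⟫ = 0 → ⟪q, u⟫ = 0 → (∀ t : ℝ, ⟪b + t • w - q, ζ⟫ = 0) →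
      (reflIso hζ q) '' S = S := by
    intro q ζ hζ hζu hqu hax
    apply hrev
    · intro t; exact reflIso_fix hζ (hax t)
    · have hPmap : ∀ x : EuclideanSpace ℝ (Fin n), ⟪x, u⟫ = (0:ℝ) →
          ⟪reflIso hζ q x, u⟫ = (0:ℝ) := by
        intro x hx
        rw [reflIso_apply, inner_sub_left, real_inner_smul_left, hζu, hx]
        ring
      ext x
      simp only [Set.mem_image, Set.mem_setOf_eq]
      constructor
      · rintro ⟨y, hy, rfl⟩
        exact hPmap y hy
      · intro hx
        refine ⟨reflIso hζ q x, hPmap x hx, reflMap_invol hζ q x⟩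
  -- step 1: the endpoints of the projected diameter lie on the axis
  have fix₁ : ∀ z : EuclideanSpace ℝ (Fin n), ⟪w, z⟫ = 0 → ⟪z, u⟫ = 0 →
      (¬∃ c : ℝ, z = c • e) → ⟪p₁ - b, z⟫ = 0 ∧ ⟪p₂ - b, z⟫ = 0 := by
    intro z hzw hzu hnpar
    have hz0 : z ≠ 0 := fun h => hnpar ⟨0, by simp [h]⟩
    set ζ := (‖z‖⁻¹ : ℝ) • z with hζdef
    have hζ1 : ‖ζ‖ = 1 := by
      rw [hζdef, norm_smul, norm_inv, norm_norm,
        inv_mul_cancel₀ (norm_ne_zero_iff.mpr hz0)]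
    have hζz : (‖z‖ : ℝ) • ζ = z := by
      rw [hζdef, smul_smul, mul_inv_cancel₀ (norm_ne_zero_iff.mpr hz0), one_smul]
    have hζu : ⟪ζ, u⟫ = (0:ℝ) := by
      rw [hζdef, real_inner_smul_left, hzu]; ring
    have hwζ : ⟪w, ζ⟫ = (0:ℝ) := by
      rw [hζdef, real_inner_smul_right, hzw]; ring
    have hax : ∀ t : ℝ, ⟪b + t • w - b, ζ⟫ = (0:ℝ) := by
      intro t
      rw [show b + t • w - b = t • w by abel, real_inner_smul_left, hwζ]; ring
    have hS' := hreflS b ζ hζ1 hζu hbu hax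
    set r := reflIso hζ1 b with hrdef
    have hrp₁ : r p₁ ∈ S := hS' ▸ Set.mem_image_of_mem _ hp₁S
    have hrp₂ : r p₂ ∈ S := hS' ▸ Set.mem_image_of_mem _ hp₂S
    have hd : dist (r p₁) (r p₂) = dist p₁ p₂ := r.dist_eq p₁ p₂
    have hpair := hSuniq _ hrp₁ _ hrp₂ hd
    rw [Set.pair_eq_pair_iff] at hpair
    have hζ0 : ζ ≠ 0 := fun h => by simp [h] at hζ1
    rcases hpair with ⟨h1, h2⟩ | ⟨h1, h2⟩
    · have key : ∀ p : EuclideanSpace ℝ (Fin n), r p = p → ⟪p - b, z⟫ = 0 := by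
        intro p hp
        have hp' : p - ((2:ℝ) * ⟪p - b, ζ⟫) • ζ = p := hp
        have h3 : ((2:ℝ) * ⟪p - b, ζ⟫) • ζ = 0 := sub_eq_self.mp hp'
        rcases smul_eq_zero.mp h3 with h4 | h4
        · have h5 : ⟪p - b, ζ⟫ = 0 := by linarith [h4]
          rw [← hζz, real_inner_smul_right, h5]; ring
        · exact absurd h4 hζ0
      exact ⟨key p₁ h1, key p₂ h2⟩
    · exfalso
      have h3 : p₂ - p₁ = (-(2 * ⟪p₁ - b, ζ⟫)) • ζ := by
        rw [← h1, hrdef, reflIso_apply]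
        module
      rw [hp21] at h3
      set c : ℝ := -(2 * ⟪p₁ - b, ζ⟫) with hcdef
      have hc0 : c ≠ 0 := by
        intro h
        rw [h, zero_smul] at h3
        exact he0 h3
      apply hnpar
      have h4 : e = (c * ‖z‖⁻¹) • z := by rw [h3, hζdef, smul_smul]
      refine ⟨(c * ‖z‖⁻¹)⁻¹, ?_⟩
      rw [h4, smul_smul, inv_mul_cancel₀, one_smul]
      exact mul_ne_zero hc0 (inv_ne_zero (norm_ne_zero_iff.mpr hz0))
  have fixall : ∀ z : EuclideanSpace ℝ (Fin n), ⟪w, z⟫ = 0 → ⟪z, u⟫ = 0 →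
      ⟪p₁ - b, z⟫ = 0 ∧ ⟪p₂ - b, z⟫ = 0 := by
    intro z hzw hzu
    by_cases hpar : ∃ c : ℝ, z = c • e
    · obtain ⟨y, hy1, hyw, hyu, hye⟩ := exists_unit_orth hn w u e
      have hy0 : y ≠ 0 := fun h => by simp [h] at hy1
      have hee : ⟪e, e⟫ ≠ (0:ℝ) := fun h => he0 (inner_self_eq_zero.mp h)
      have hynpar : ¬∃ c : ℝ, y = c • e := by
        rintro ⟨c, rfl⟩
        rw [real_inner_smul_right] at hye
        rcases mul_eq_zero.mp hye with h | h
        · exact hy0 (by rw [h, zero_smul])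
        · exact hee h
      have h1 := fix₁ y hyw (by rw [real_inner_comm]; exact hyu) hynpar
      have hznpar : ¬∃ c' : ℝ, z + y = c' • e := by
        rintro ⟨c', hc'⟩
        obtain ⟨c, rfl⟩ := hpar
        apply hynpar
        refine ⟨c' - c, ?_⟩
        rw [sub_smul, ← hc']
        abel
      have h3 := fix₁ (z + y)
        (by rw [inner_add_right, hzw, hyw]; ring)
        (by
          have huy : ⟪y, u⟫ = (0:ℝ) := by rw [real_inner_comm]; exact hyu
          rw [inner_add_left, hzu, huy]; ring)
        hznpar
      constructor
      · have := h3.1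
        rw [inner_add_right, h1.1] at this
        linarith
      · have := h3.2
        rw [inner_add_right, h1.2] at this
        linarith
    · exact fix₁ z hzw hzu hpar
  -- hence p₁, p₂ ∈ b + span{w, u}, and being ⊥ u they are on the axis
  have hspan : ∀ p : EuclideanSpace ℝ (Fin n), ⟪p, u⟫ = 0 →
      (∀ z : EuclideanSpace ℝ (Fin n), ⟪w, z⟫ = 0 → ⟪z, u⟫ = 0 → ⟪p - b, z⟫ = 0) →
      ∃ s : ℝ, p = b + s • w := by
    intro p hpu hperp
    set W : Submodule ℝ (EuclideanSpace ℝ (Fin n)) := Submodule.span ℝ {w, u} with hWdef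
    have hmem : p - b ∈ Wᗮᗮ := by
      rw [Submodule.mem_orthogonal]
      intro z hz
      rw [Submodule.mem_orthogonal] at hz
      have hzw : ⟪w, z⟫ = (0:ℝ) := hz w (Submodule.subset_span (by simp))
      have hzu : ⟪z, u⟫ = (0:ℝ) := by
        rw [real_inner_comm]; exact hz u (Submodule.subset_span (by simp))
      rw [real_inner_comm]
      exact hperp z hzw hzu
    rw [Submodule.orthogonal_orthogonal] at hmem
    rw [Submodule.mem_span_pair] at hmem
    obtain ⟨s, t, hst⟩ := hmem
    have ht : t = 0 := by
      have h1 : ⟪p - b, u⟫ = (0:ℝ) := by rw [inner_sub_left, hpu, hbu]; ring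
      rw [← hst, inner_add_left, real_inner_smul_left, real_inner_smul_left,
        hwu, huu] at h1
      linarith
    refine ⟨s, ?_⟩
    rw [ht, zero_smul, add_zero] at hst
    exact eq_add_of_sub_eq' hst.symm
  have hp₁u : ⟪p₁, u⟫ = (0:ℝ) := hπP d₁
  have hp₂u : ⟪p₂, u⟫ = (0:ℝ) := hπP d₂
  obtain ⟨s₁, hs₁⟩ := hspan p₁ hp₁u (fun z hzw hzu => (fixall z hzw hzu).1)
  obtain ⟨s₂, hs₂⟩ := hspan p₂ hp₂u (fun z hzw hzu => (fixall z hzw hzu).2)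
  have hew : e = (s₂ - s₁) • w := by
    rw [← hp21, hs₁, hs₂, sub_smul]
    abel
  have hs12 : s₂ - s₁ ≠ 0 := by
    intro h
    rw [h, zero_smul] at hew
    exact he0 hew
  -- w is parallel to e, hence orthogonal to w₂ - v
  have hew₂v : ⟪e, w₂ - v⟫ = (0:ℝ) := by
    have h1 : ⟪e, w₂⟫ = ⟪e, v⟫ := by
      rw [hw₂def]
      conv_lhs => rw [← hBe]
      rw [B.inner_map_map]
    rw [inner_sub_right, h1]; ring
  have hww₂v : ⟪w, w₂ - v⟫ = (0:ℝ) := by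
    have h1 : w = (s₂ - s₁)⁻¹ • e := by
      rw [hew, smul_smul, inv_mul_cancel₀ hs12, one_smul]
    rw [h1, real_inner_smul_left, hew₂v]; ring
  -- the final reflection, exchanging v and w₂
  set ρ : ℝ := ‖w₂ - v‖ with hρdef
  have hρ0 : ρ ≠ 0 := norm_ne_zero_iff.mpr (sub_ne_zero.mpr hvv)
  set ζ := (ρ⁻¹ : ℝ) • (w₂ - v) with hζdef
  have hζ1 : ‖ζ‖ = 1 := by
    rw [hζdef, norm_smul, norm_inv, norm_norm, ← hρdef, inv_mul_cancel₀ hρ0]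
  have hρζ : ρ • ζ = w₂ - v := by
    rw [hζdef, smul_smul, mul_inv_cancel₀ hρ0, one_smul]
  have hw₂vu : ⟪w₂ - v, u⟫ = (0:ℝ) := by
    rw [inner_sub_left, huv, huw]; ring
  have hζu : ⟪ζ, u⟫ = (0:ℝ) := by
    rw [hζdef, real_inner_smul_left, hw₂vu]; ring
  have hax : ∀ t : ℝ, ⟪b + t • w - p₁, ζ⟫ = (0:ℝ) := by
    intro t
    have h1 : b + t • w - p₁ = (t - s₁) • w := by
      rw [hs₁, sub_smul]; abel
    rw [h1, real_inner_smul_left, hζdef, real_inner_smul_right, hww₂v]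
    ring
  have hgS := hreflS p₁ ζ hζ1 hζu hp₁u hax
  -- translate into a support function identity
  have him : (fun x => linRefl hζ1 x + ((2:ℝ) * ⟪p₁, ζ⟫) • ζ) '' S = S := by
    have him2 : (fun x => linRefl hζ1 x + ((2:ℝ) * ⟪p₁, ζ⟫) • ζ) '' S
        = (reflIso hζ1 p₁) '' S :=
      Set.image_congr (fun x _ => (reflIso_eq_linRefl hζ1 p₁ x).symm)
    rw [him2, hgS]
  have hsup := supFn_image (linRefl hζ1) (((2:ℝ) * ⟪p₁, ζ⟫) • ζ) hSne hScomp w₂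
  rw [him] at hsup
  -- compute the reflected direction
  have hnorm : ‖w₂‖ = ‖v‖ := by rw [hw₂def, B.norm_map]
  have hinner2 : (2:ℝ) * ⟪w₂, w₂ - v⟫ = ρ ^ 2 := by
    have h1 : ρ ^ 2 = ‖w₂‖ ^ 2 - 2 * ⟪w₂, v⟫ + ‖v‖ ^ 2 := by
      rw [hρdef]
      exact norm_sub_sq_real w₂ v
    have h2 : ⟪w₂, w₂ - v⟫ = ‖w₂‖ ^ 2 - ⟪w₂, v⟫ := by
      rw [inner_sub_right, real_inner_self_eq_norm_sq]
    rw [h2, h1, hnorm]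
    ring
  have hw₂ζ : ⟪w₂, ζ⟫ = ρ / 2 := by
    rw [hζdef, real_inner_smul_right]
    have hX : ⟪w₂, w₂ - v⟫ = ρ ^ 2 / 2 := by linarith [hinner2]
    rw [hX]
    field_simp
  have hrefl_w₂ : (linRefl hζ1).symm w₂ = v := by
    rw [linRefl_symm_apply, hw₂ζ]
    have h2 : (2 * (ρ / 2)) • ζ = w₂ - v := by
      rw [show (2 : ℝ) * (ρ / 2) = ρ by ring, hρζ]
    rw [h2]; abel
  have hcterm : ⟪((2:ℝ) * ⟪p₁, ζ⟫) • ζ, w₂⟫ = ⟪d₁, w₂ - v⟫ := by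
    have h1 : ⟪((2:ℝ) * ⟪p₁, ζ⟫) • ζ, w₂⟫ = (2 * ⟪p₁, ζ⟫) * ⟪ζ, w₂⟫ :=
      real_inner_smul_left _ _ _
    have h2 : ⟪ζ, w₂⟫ = ρ / 2 := by rw [real_inner_comm]; exact hw₂ζ
    have h3 : ⟪p₁, w₂ - v⟫ = ⟪p₁, ρ • ζ⟫ := by rw [hρζ]
    have h4 : ⟪p₁, w₂ - v⟫ = ρ * ⟪p₁, ζ⟫ := by
      rw [h3, real_inner_smul_right]
    have h5 : ⟪p₁, w₂ - v⟫ = ⟪d₁, w₂ - v⟫ := by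
      have h6 : p₁ = d₁ - (⟪d₁, u⟫ : ℝ) • u := rfl
      have h7 : ⟪u, w₂ - v⟫ = (0:ℝ) := by rw [real_inner_comm]; exact hw₂vu
      rw [h6, inner_sub_left, real_inner_smul_left, h7]
      ring
    rw [h1, h2, ← h5, h4]
    ring
  -- relate S-support to K-support
  have hSK : ∀ y : EuclideanSpace ℝ (Fin n), ⟪y, u⟫ = 0 → supFn S y = supFn K y := by
    intro y hy
    unfold supFn
    rw [hSdef, Set.image_image]
    congr 1
    apply Set.image_congr
    intro x _
    show ⟪projHyp u x, y⟫ = ⟪x, y⟫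
    have huy : ⟪u, y⟫ = (0:ℝ) := by rw [real_inner_comm]; exact hy
    rw [projHyp, inner_sub_left, real_inner_smul_left, huy]
    ring
  rw [hrefl_w₂, hcterm] at hsup
  rw [hSK w₂ huw, hSK v huv] at hsup
  rw [inner_sub_right] at hsup
  linarith [hsup]

end Stmt12Aux

section Stmt12Final

local notation "⟪" x ", " y "⟫" => @inner ℝ _ _ x y

/-- a strictly convex body `K ⊂ ℝⁿ`, `n ≥ 4`, with a unique
diameter `D = [d₁, d₂]`, all of whose orthogonal projections onto hyperplanes
are `(n-1)`-dimensional bodies of revolution, is a body of revolution with axis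
containing `D`. -/
theorem stmt_12 {n : ℕ} (hn : 4 ≤ n)
    (K : Set (EuclideanSpace ℝ (Fin n)))
    (hK : IsConvexBody K) (hsc : StrictConvex ℝ K)
    (d₁ d₂ : EuclideanSpace ℝ (Fin n)) (hD : UniqueDiameter K d₁ d₂)
    (hproj : ∀ u : EuclideanSpace ℝ (Fin n), ‖u‖ = 1 →
      ∃ b w, IsRevBodyIn {x | (inner ℝ x u : ℝ) = 0} (projHyp u '' K) b w) :
    IsRevBody K d₁ (d₂ - d₁) := by
  classical
  obtain ⟨hKcomp, hKconv, hKint⟩ := hK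
  have hKne : K.Nonempty := ⟨d₁, hD.1⟩
  intro f hf
  set e : EuclideanSpace ℝ (Fin n) := d₂ - d₁ with he_def
  set A := f.toRealLinearIsometryEquiv with hAdef
  have hfx : ∀ x, f x = A x + f 0 := by
    intro x
    rw [hAdef, IsometryEquiv.toRealLinearIsometryEquiv_apply]
    abel
  have hfd₁ : f d₁ = d₁ := by
    have := hf 0
    simpa using this
  have hfd₁e : f (d₁ + e) = d₁ + e := by
    have := hf 1
    simpa using this
  have hf0 : f 0 = d₁ - A d₁ := by
    have h1 := hfx d₁
    rw [hfd₁] at h1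
    exact eq_sub_of_add_eq' h1.symm
  have hAe : A e = e := by
    have h1 := hfx (d₁ + e)
    rw [hfd₁e, map_add, hf0] at h1
    have h2 : d₁ + e = A e + d₁ := by rw [h1]; abel
    have h3 : e + d₁ = A e + d₁ := by rw [← h2]; abel
    exact (add_right_cancel h3).symm
  have hAse : A.symm e = e := by
    conv_lhs => rw [← hAe]
    exact A.symm_apply_apply e
  -- equality of support functions
  have hsupeq : ∀ y, supFn (f '' K) y = supFn K y := by
    intro y
    have himg : f '' K = (fun x => A x + f 0) '' K :=
      Set.image_congr (fun x _ => hfx x)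
    have h1 := supFn_image A (f 0) hKne hKcomp y
    rw [← himg] at h1
    have h2 := stmt12_key hn hKcomp hD hproj A.symm (by rw [← he_def]; exact hAse) y
    have h3 : ⟪f 0, y⟫ = ⟪d₁, y⟫ - ⟪d₁, A.symm y⟫ := by
      rw [hf0, inner_sub_left, inner_symm_left]
    rw [h1, h3]
    linarith [h2]
  -- conclude set equality
  have hfKcomp : IsCompact (f '' K) := hKcomp.image f.continuous
  have hfKne : (f '' K).Nonempty := hKne.image f
  have hfKconv : Convex ℝ (f '' K) := by
    have himg : f '' K = (fun x => f 0 + x) '' (A.toLinearEquiv.toLinearMap '' K) := by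
      rw [Set.image_image]
      apply Set.image_congr
      intro x _
      rw [hfx x]
      show A x + f 0 = f 0 + A x
      abel
    rw [himg]
    exact (hKconv.linear_image A.toLinearEquiv.toLinearMap).translate (f 0)
  apply Set.Subset.antisymm
  · exact subset_of_supFn_le hfKcomp hKne hKconv hKcomp.isClosed
      (fun v => le_of_eq (hsupeq v))
  · exact subset_of_supFn_le hKcomp hfKne hfKconv hfKcomp.isClosed
      (fun v => le_of_eq (hsupeq v).symm)

end Stmt12Final
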